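/- IA₁ proves the negative translation (DNS₁)^g of every instance of DNS₁; therefore, for any system S with IA₁ ⊆ S ⊆ B, the minimum classical extension of S + DNS₁ is S^{+g} + DNS₁. -/

import Mathlib

/-!
A deep embedding of the two-sorted language of intuitionistic analysis
(Kleene-Vesley), with number variables and one-place function (choice
sequence) variables, finitely many constants for primitive recursive
function(al)s (successor, +, ·, truncated subtraction ∸, pairing ⟨·,·⟩,
finite-sequence coding: concatenation *, singleton code ⟨s⟩, empty code ⟨⟩,
length lh, the Seq predicate, Kleene's T-predicate and U-function, and the
course-of-values functional ᾱ(x)), λ-abstraction with λ-reduction,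
intuitionistic two-sorted predicate logic, the Gödel–Gentzen negative
translation g, and the axiom schemas of the paper
"Calibrating the negative interpretation" (J.R. Moschovakis).
-/

namespace NegInterp

/-! Terms (type 0) and functors (type 1). -/
mutual
inductive Term : Type
  | var   : ℕ → Term
  | zero  : Term
  | succ  : Term → Term
  | add   : Term → Term → Term
  | mul   : Term → Term → Term
  | sub   : Term → Term → Term           -- truncated subtraction
  | pair  : Term → Term → Term           -- ⟨s,t⟩
  | cat   : Term → Term → Term           -- concatenation w ∗ v of sequence codes
  | sing  : Term → Term                  -- ⟨s⟩
  | empt  : Term                         -- ⟨ ⟩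
  | lh    : Term → Term                  -- length of a sequence code
  | seqc  : Term → Term                  -- characteristic function of Seq
  | kT    : Term → Term → Term → Term    -- characteristic function of Kleene's T
  | kU    : Term → Term                  -- Kleene's result-extraction U
  | app   : Func → Term → Term           -- φ(t)
  | bar   : Func → Term → Term           -- ᾱ(t), the code of (α(0),…,α(t−1))
inductive Func : Type
  | fvar : ℕ → Func
  | lam  : ℕ → Term → Func               -- λx.t
end

open Term Func

/-- Coding of finite sequences of naturals by naturals (every natural is a code). -/
def listCode (l : List ℕ) : ℕ := Encodable.encode l
def listDec (n : ℕ) : List ℕ := Denumerable.ofNat (List ℕ) n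

/-- Kleene's T-predicate: y codes a (fuel, value) pair witnessing that the
machine with code e halts on input x with the given value. -/
def KTmeta (e x y : ℕ) : Prop :=
  Nat.Partrec.Code.evaln y.unpair.1 (Denumerable.ofNat Nat.Partrec.Code e) x = some y.unpair.2

instance (e x y : ℕ) : Decidable (KTmeta e x y) := by unfold KTmeta; infer_instance

/-! Standard (full classical ω-model) interpretation of terms and functors,
used only to state the defining axioms of the primitive recursive constants. -/
mutual
def evalT (ρ : ℕ → ℕ) (σ : ℕ → ℕ → ℕ) : Term → ℕ
  | .var n => ρ n
  | .zero => 0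
  | .succ t => evalT ρ σ t + 1
  | .add s t => evalT ρ σ s + evalT ρ σ t
  | .mul s t => evalT ρ σ s * evalT ρ σ t
  | .sub s t => evalT ρ σ s - evalT ρ σ t
  | .pair s t => Nat.pair (evalT ρ σ s) (evalT ρ σ t)
  | .cat s t => listCode (listDec (evalT ρ σ s) ++ listDec (evalT ρ σ t))
  | .sing t => listCode [evalT ρ σ t]
  | .empt => listCode []
  | .lh t => (listDec (evalT ρ σ t)).length
  | .seqc _ => 0      -- under this coding every number codes a finite sequence
  | .kT e x y => if KTmeta (evalT ρ σ e) (evalT ρ σ x) (evalT ρ σ y) then 0 else 1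
  | .kU y => (Nat.unpair (evalT ρ σ y)).2
  | .app φ t => evalF ρ σ φ (evalT ρ σ t)
  | .bar φ t => listCode ((List.range (evalT ρ σ t)).map (evalF ρ σ φ))
def evalF (ρ : ℕ → ℕ) (σ : ℕ → ℕ → ℕ) : Func → ℕ → ℕ
  | .fvar n => σ n
  | .lam x t => fun m => evalT (Function.update ρ x m) σ t
end

/-! Free number variables of a term / functor. -/
mutual
def tFN : Term → Set ℕ
  | .var n => {n}
  | .zero => ∅
  | .empt => ∅
  | .succ t => tFN t
  | .sing t => tFN t
  | .lh t => tFN t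
  | .seqc t => tFN t
  | .kU t => tFN t
  | .add s t => tFN s ∪ tFN t
  | .mul s t => tFN s ∪ tFN t
  | .sub s t => tFN s ∪ tFN t
  | .pair s t => tFN s ∪ tFN t
  | .cat s t => tFN s ∪ tFN t
  | .kT e x y => tFN e ∪ tFN x ∪ tFN y
  | .app φ t => fFN φ ∪ tFN t
  | .bar φ t => fFN φ ∪ tFN t
def fFN : Func → Set ℕ
  | .fvar _ => ∅
  | .lam x t => tFN t \ {x}
end

/-! Free function variables of a term / functor. -/
mutual
def tFF : Term → Set ℕ
  | .var _ => ∅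
  | .zero => ∅
  | .empt => ∅
  | .succ t => tFF t
  | .sing t => tFF t
  | .lh t => tFF t
  | .seqc t => tFF t
  | .kU t => tFF t
  | .add s t => tFF s ∪ tFF t
  | .mul s t => tFF s ∪ tFF t
  | .sub s t => tFF s ∪ tFF t
  | .pair s t => tFF s ∪ tFF t
  | .cat s t => tFF s ∪ tFF t
  | .kT e x y => tFF e ∪ tFF x ∪ tFF y
  | .app φ t => fFF φ ∪ tFF t
  | .bar φ t => fFF φ ∪ tFF t
def fFF : Func → Set ℕ
  | .fvar a => {a}
  | .lam _ t => tFF t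
end

/-! Substitution of a term for a number variable in terms / functors. -/
mutual
def tSubN (n : ℕ) (u : Term) : Term → Term
  | .var m => if m = n then u else .var m
  | .zero => .zero
  | .empt => .empt
  | .succ t => .succ (tSubN n u t)
  | .sing t => .sing (tSubN n u t)
  | .lh t => .lh (tSubN n u t)
  | .seqc t => .seqc (tSubN n u t)
  | .kU t => .kU (tSubN n u t)
  | .add s t => .add (tSubN n u s) (tSubN n u t)
  | .mul s t => .mul (tSubN n u s) (tSubN n u t)
  | .sub s t => .sub (tSubN n u s) (tSubN n u t)
  | .pair s t => .pair (tSubN n u s) (tSubN n u t)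
  | .cat s t => .cat (tSubN n u s) (tSubN n u t)
  | .kT e x y => .kT (tSubN n u e) (tSubN n u x) (tSubN n u y)
  | .app φ t => .app (fSubN n u φ) (tSubN n u t)
  | .bar φ t => .bar (fSubN n u φ) (tSubN n u t)
def fSubN (n : ℕ) (u : Term) : Func → Func
  | .fvar a => .fvar a
  | .lam x t => if x = n then .lam x t else .lam x (tSubN n u t)
end

/-! Substitution of a functor for a function variable in terms / functors. -/
mutual
def tSubF (a : ℕ) (ψ : Func) : Term → Term
  | .var m => .var m
  | .zero => .zero
  | .empt => .empt
  | .succ t => .succ (tSubF a ψ t)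
  | .sing t => .sing (tSubF a ψ t)
  | .lh t => .lh (tSubF a ψ t)
  | .seqc t => .seqc (tSubF a ψ t)
  | .kU t => .kU (tSubF a ψ t)
  | .add s t => .add (tSubF a ψ s) (tSubF a ψ t)
  | .mul s t => .mul (tSubF a ψ s) (tSubF a ψ t)
  | .sub s t => .sub (tSubF a ψ s) (tSubF a ψ t)
  | .pair s t => .pair (tSubF a ψ s) (tSubF a ψ t)
  | .cat s t => .cat (tSubF a ψ s) (tSubF a ψ t)
  | .kT e x y => .kT (tSubF a ψ e) (tSubF a ψ x) (tSubF a ψ y)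
  | .app φ t => .app (fSubF a ψ φ) (tSubF a ψ t)
  | .bar φ t => .bar (fSubF a ψ φ) (tSubF a ψ t)
def fSubF (a : ℕ) (ψ : Func) : Func → Func
  | .fvar b => if b = a then ψ else .fvar b
  | .lam x t => .lam x (tSubF a ψ t)
end

/-! "u is free for (the number variable) n" in a term/functor
(no free occurrence of n lies within a λ binding a variable free in u). -/
mutual
def tFForN (u : Term) (n : ℕ) : Term → Prop
  | .var _ => True
  | .zero => True
  | .empt => True
  | .succ t => tFForN u n t
  | .sing t => tFForN u n t
  | .lh t => tFForN u n t
  | .seqc t => tFForN u n t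
  | .kU t => tFForN u n t
  | .add s t => tFForN u n s ∧ tFForN u n t
  | .mul s t => tFForN u n s ∧ tFForN u n t
  | .sub s t => tFForN u n s ∧ tFForN u n t
  | .pair s t => tFForN u n s ∧ tFForN u n t
  | .cat s t => tFForN u n s ∧ tFForN u n t
  | .kT e x y => tFForN u n e ∧ tFForN u n x ∧ tFForN u n y
  | .app φ t => fFForN u n φ ∧ tFForN u n t
  | .bar φ t => fFForN u n φ ∧ tFForN u n t
def fFForN (u : Term) (n : ℕ) : Func → Prop
  | .fvar _ => True
  | .lam x t => x = n ∨ n ∉ tFN t ∨ (x ∉ tFN u ∧ tFForN u n t)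
end

/-! "ψ is free for (the function variable) a" in a term/functor. -/
mutual
def tFForF (ψ : Func) (a : ℕ) : Term → Prop
  | .var _ => True
  | .zero => True
  | .empt => True
  | .succ t => tFForF ψ a t
  | .sing t => tFForF ψ a t
  | .lh t => tFForF ψ a t
  | .seqc t => tFForF ψ a t
  | .kU t => tFForF ψ a t
  | .add s t => tFForF ψ a s ∧ tFForF ψ a t
  | .mul s t => tFForF ψ a s ∧ tFForF ψ a t
  | .sub s t => tFForF ψ a s ∧ tFForF ψ a t
  | .pair s t => tFForF ψ a s ∧ tFForF ψ a t
  | .cat s t => tFForF ψ a s ∧ tFForF ψ a t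
  | .kT e x y => tFForF ψ a e ∧ tFForF ψ a x ∧ tFForF ψ a y
  | .app φ t => fFForF ψ a φ ∧ tFForF ψ a t
  | .bar φ t => fFForF ψ a φ ∧ tFForF ψ a t
def fFForF (ψ : Func) (a : ℕ) : Func → Prop
  | .fvar _ => True
  | .lam x t => a ∉ tFF t ∨ (x ∉ fFN ψ ∧ tFForF ψ a t)
end

/-- Formulas of the two-sorted language; prime formulas are equations between
terms of type 0 (equality of type 1 is defined extensionally). -/
inductive Formula : Type
  | eq     : Term → Term → Formula
  | falsum : Formula
  | and    : Formula → Formula → Formula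
  | or     : Formula → Formula → Formula
  | imp    : Formula → Formula → Formula
  | allN   : ℕ → Formula → Formula
  | exN    : ℕ → Formula → Formula
  | allF   : ℕ → Formula → Formula
  | exF    : ℕ → Formula → Formula

namespace Formula

/-- ¬A -/
def neg (A : Formula) : Formula := A.imp .falsum
/-- ¬¬A -/
def nneg (A : Formula) : Formula := neg (neg A)
/-- A ↔ B -/
def iff (A B : Formula) : Formula := (A.imp B).and (B.imp A)

end Formula

open Formula

/-- s ≤ t, expressed by the primitive recursive constant ∸. -/
def tle (s t : Term) : Formula := .eq (Term.sub s t) Term.zero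
/-- s < t -/
def tlt (s t : Term) : Formula := tle (Term.succ s) t
/-- Seq(w) : w codes a finite sequence. -/
def seqF (t : Term) : Formula := .eq (Term.seqc t) Term.zero

/-- Free number variables of a formula. -/
def freeN : Formula → Set ℕ
  | .eq s t => tFN s ∪ tFN t
  | .falsum => ∅
  | .and A B => freeN A ∪ freeN B
  | .or A B => freeN A ∪ freeN B
  | .imp A B => freeN A ∪ freeN B
  | .allN x A => freeN A \ {x}
  | .exN x A => freeN A \ {x}
  | .allF _ A => freeN A
  | .exF _ A => freeN A

/-- Free function variables of a formula. -/
def freeF : Formula → Set ℕ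
  | .eq s t => tFF s ∪ tFF t
  | .falsum => ∅
  | .and A B => freeF A ∪ freeF B
  | .or A B => freeF A ∪ freeF B
  | .imp A B => freeF A ∪ freeF B
  | .allN _ A => freeF A
  | .exN _ A => freeF A
  | .allF a A => freeF A \ {a}
  | .exF a A => freeF A \ {a}

/-- Substitution A[u/n] of a term u for the number variable n. -/
def subN (n : ℕ) (u : Term) : Formula → Formula
  | .eq s t => .eq (tSubN n u s) (tSubN n u t)
  | .falsum => .falsum
  | .and A B => .and (subN n u A) (subN n u B)
  | .or A B => .or (subN n u A) (subN n u B)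
  | .imp A B => .imp (subN n u A) (subN n u B)
  | .allN x A => if x = n then .allN x A else .allN x (subN n u A)
  | .exN x A => if x = n then .exN x A else .exN x (subN n u A)
  | .allF a A => .allF a (subN n u A)
  | .exF a A => .exF a (subN n u A)

/-- Substitution A[ψ/a] of a functor ψ for the function variable a. -/
def subF (a : ℕ) (ψ : Func) : Formula → Formula
  | .eq s t => .eq (tSubF a ψ s) (tSubF a ψ t)
  | .falsum => .falsum
  | .and A B => .and (subF a ψ A) (subF a ψ B)
  | .or A B => .or (subF a ψ A) (subF a ψ B)
  | .imp A B => .imp (subF a ψ A) (subF a ψ B)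
  | .allN x A => .allN x (subF a ψ A)
  | .exN x A => .exN x (subF a ψ A)
  | .allF b A => if b = a then .allF b A else .allF b (subF a ψ A)
  | .exF b A => if b = a then .exF b A else .exF b (subF a ψ A)

/-- "The term u is free for the number variable n in A". -/
def FreeForN (u : Term) (n : ℕ) : Formula → Prop
  | .eq s t => tFForN u n s ∧ tFForN u n t
  | .falsum => True
  | .and A B => FreeForN u n A ∧ FreeForN u n B
  | .or A B => FreeForN u n A ∧ FreeForN u n B
  | .imp A B => FreeForN u n A ∧ FreeForN u n B
  | .allN m A => m = n ∨ n ∉ freeN A ∨ (m ∉ tFN u ∧ FreeForN u n A)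
  | .exN m A => m = n ∨ n ∉ freeN A ∨ (m ∉ tFN u ∧ FreeForN u n A)
  | .allF b A => n ∉ freeN A ∨ (b ∉ tFF u ∧ FreeForN u n A)
  | .exF b A => n ∉ freeN A ∨ (b ∉ tFF u ∧ FreeForN u n A)

/-- "The functor ψ is free for the function variable a in A". -/
def FreeForF (ψ : Func) (a : ℕ) : Formula → Prop
  | .eq s t => tFForF ψ a s ∧ tFForF ψ a t
  | .falsum => True
  | .and A B => FreeForF ψ a A ∧ FreeForF ψ a B
  | .or A B => FreeForF ψ a A ∧ FreeForF ψ a B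
  | .imp A B => FreeForF ψ a A ∧ FreeForF ψ a B
  | .allN m A => a ∉ freeF A ∨ (m ∉ fFN ψ ∧ FreeForF ψ a A)
  | .exN m A => a ∉ freeF A ∨ (m ∉ fFN ψ ∧ FreeForF ψ a A)
  | .allF b A => b = a ∨ a ∉ freeF A ∨ (b ∉ fFF ψ ∧ FreeForF ψ a A)
  | .exF b A => b = a ∨ a ∉ freeF A ∨ (b ∉ fFF ψ ∧ FreeForF ψ a A)

/-- Derivability from a set of (mathematical) axioms by two-sorted
intuitionistic predicate logic with equality at type 0 as sole prime relation;
a Hilbert-style system with modus ponens and generalization. -/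
inductive Prov (T : Set Formula) : Formula → Prop
  | ax {A : Formula} (h : A ∈ T) : Prov T A
  | k {A B : Formula} : Prov T (A.imp (B.imp A))
  | s {A B C : Formula} : Prov T ((A.imp (B.imp C)).imp ((A.imp B).imp (A.imp C)))
  | andI {A B : Formula} : Prov T (A.imp (B.imp (A.and B)))
  | andE1 {A B : Formula} : Prov T ((A.and B).imp A)
  | andE2 {A B : Formula} : Prov T ((A.and B).imp B)
  | orI1 {A B : Formula} : Prov T (A.imp (A.or B))
  | orI2 {A B : Formula} : Prov T (B.imp (A.or B))
  | orE {A B C : Formula} : Prov T ((A.imp C).imp ((B.imp C).imp ((A.or B).imp C)))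
  | exfalso {A : Formula} : Prov T (Formula.falsum.imp A)
  | mp {A B : Formula} : Prov T (A.imp B) → Prov T A → Prov T B
  | allNE {n : ℕ} {A : Formula} {u : Term} (h : FreeForN u n A) :
      Prov T ((Formula.allN n A).imp (subN n u A))
  | allNI {n : ℕ} {A B : Formula} (h : n ∉ freeN A) :
      Prov T (A.imp B) → Prov T (A.imp (Formula.allN n B))
  | exNI {n : ℕ} {A : Formula} {u : Term} (h : FreeForN u n A) :
      Prov T ((subN n u A).imp (Formula.exN n A))
  | exNE {n : ℕ} {A B : Formula} (h : n ∉ freeN B) :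
      Prov T (A.imp B) → Prov T ((Formula.exN n A).imp B)
  | allFE {a : ℕ} {A : Formula} {ψ : Func} (h : FreeForF ψ a A) :
      Prov T ((Formula.allF a A).imp (subF a ψ A))
  | allFI {a : ℕ} {A B : Formula} (h : a ∉ freeF A) :
      Prov T (A.imp B) → Prov T (A.imp (Formula.allF a B))
  | exFI {a : ℕ} {A : Formula} {ψ : Func} (h : FreeForF ψ a A) :
      Prov T ((subF a ψ A).imp (Formula.exF a A))
  | exFE {a : ℕ} {A B : Formula} (h : a ∉ freeF B) :
      Prov T (A.imp B) → Prov T ((Formula.exF a A).imp B)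
  | genN {n : ℕ} {A : Formula} : Prov T A → Prov T (Formula.allN n A)
  | genF {a : ℕ} {A : Formula} : Prov T A → Prov T (Formula.allF a A)

/-- Two systems (sets of axioms over the same language) have the same theorems. -/
def SameTheory (T₁ T₂ : Set Formula) : Prop := ∀ A, Prov T₁ A ↔ Prov T₂ A

/-- T₁ is a subsystem of T₂: every theorem of T₁ is a theorem of T₂. -/
def Subsystem (T₁ T₂ : Set Formula) : Prop := ∀ A, Prov T₁ A → Prov T₂ A

/-- The Gödel–Gentzen negative translation: hereditarily replace A∨B by
¬(¬A & ¬B) and ∃A by ¬∀¬A (prime formulas, being equations between terms of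
type 0, are their own translations). -/
def gTrans : Formula → Formula
  | .eq s t => .eq s t
  | .falsum => .falsum
  | .and A B => .and (gTrans A) (gTrans B)
  | .or A B => Formula.neg ((Formula.neg (gTrans A)).and (Formula.neg (gTrans B)))
  | .imp A B => .imp (gTrans A) (gTrans B)
  | .allN x A => .allN x (gTrans A)
  | .exN x A => Formula.neg (.allN x (Formula.neg (gTrans A)))
  | .allF a A => .allF a (gTrans A)
  | .exF a A => Formula.neg (.allF a (Formula.neg (gTrans A)))

/-! ### The base system IA₁ -/

/-- Universally valid equations: the defining axioms of the finitely many
primitive recursive constants of the language (all equations true in the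
intended interpretation under every assignment). -/
def validEq : Set Formula :=
  {F | ∃ s t : Term, F = Formula.eq s t ∧ ∀ ρ σ, evalT ρ σ s = evalT ρ σ t}

/-- Leibniz equality schema (includes the open equality axiom
∀x∀y(x=y → α(x)=α(y))). -/
def eqAx : Set Formula :=
  {F | ∃ (n : ℕ) (s t : Term) (A : Formula),
    FreeForN s n A ∧ FreeForN t n A ∧
    F = (Formula.eq s t).imp ((subN n s A).imp (subN n t A))}

/-- Successor axioms. -/
def sucAx : Set Formula :=
  {F | ∃ s t : Term, F = (Formula.eq (Term.succ s) (Term.succ t)).imp (.eq s t)} ∪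
  {F | ∃ t : Term, F = Formula.neg (.eq (Term.succ t) Term.zero)}

/-- Mathematical induction, for all formulas of the two-sorted language. -/
def indAx : Set Formula :=
  {F | ∃ (x : ℕ) (A : Formula),
    F = ((subN x Term.zero A).and
          (Formula.allN x (A.imp (subN x (Term.succ (Term.var x)) A)))).imp
        (Formula.allN x A)}

/-- λ-reduction: (λx.t)(s) = t[s/x], for s free for x in t. -/
def lamAx : Set Formula :=
  {F | ∃ (x : ℕ) (t s : Term), tFForN s x t ∧
    F = Formula.eq (Term.app (Func.lam x t) s) (tSubN x s t)}

/-- IA₁: two-sorted intuitionistic arithmetic. -/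
def IA1 : Set Formula := validEq ∪ eqAx ∪ sucAx ∪ indAx ∪ lamAx

/-- The double negation schema ¬¬A → A of classical logic. -/
def DNE : Set Formula := {F | ∃ A : Formula, F = (Formula.nneg A).imp A}

/-- The Gödel–Gentzen negative translations of all theorems of S + (¬¬A→A). -/
def gThms (S : Set Formula) : Set Formula :=
  {F | ∃ A : Formula, Prov (S ∪ DNE) A ∧ F = gTrans A}

/-- The minimum classical extension S^{+g} of S: the least extension of S
proving the negative translation of every theorem of S + (¬¬A→A). -/
def minClassExt (S : Set Formula) : Set Formula := S ∪ gThms S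

/-! ### Classes of formulas -/

/-- "Quantifier-free" formulas: no function quantifiers and only bounded
number quantifiers. -/
inductive IsQF : Formula → Prop
  | eq (s t : Term) : IsQF (.eq s t)
  | falsum : IsQF .falsum
  | and {A B} : IsQF A → IsQF B → IsQF (A.and B)
  | or {A B} : IsQF A → IsQF B → IsQF (A.or B)
  | imp {A B} : IsQF A → IsQF B → IsQF (A.imp B)
  | ballN {x t A} (h : x ∉ tFN t) (hA : IsQF A) :
      IsQF (.allN x ((tle (Term.var x) t).imp A))
  | bexN {x t A} (h : x ∉ tFN t) (hA : IsQF A) :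
      IsQF (.exN x ((tle (Term.var x) t).and A))

/-- Arithmetical formulas: no function quantifiers (function parameters allowed). -/
def IsArith : Formula → Prop
  | .eq _ _ => True
  | .falsum => True
  | .and A B => IsArith A ∧ IsArith B
  | .or A B => IsArith A ∧ IsArith B
  | .imp A B => IsArith A ∧ IsArith B
  | .allN _ A => IsArith A
  | .exN _ A => IsArith A
  | .allF _ _ => False
  | .exF _ _ => False

/-- Negative formulas: containing neither ∨ nor ∃. -/
def IsNeg : Formula → Prop
  | .eq _ _ => True
  | .falsum => True
  | .and A B => IsNeg A ∧ IsNeg B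
  | .or _ _ => False
  | .imp A B => IsNeg A ∧ IsNeg B
  | .allN _ A => IsNeg A
  | .exN _ _ => False
  | .allF _ A => IsNeg A
  | .exF _ _ => False

/-! ### The axiom schemas -/

/-- An instance of countable choice AC₀₀ : ∀x∃yA(x,y) → ∃α∀xA(x,α(x)). -/
def ac00Inst (x y a : ℕ) (A : Formula) : Formula :=
  (Formula.allN x (.exN y A)).imp
    (.exF a (.allN x (subN y (Term.app (Func.fvar a) (Term.var x)) A)))

def ac00Side (x y a : ℕ) (A : Formula) : Prop :=
  x ≠ y ∧ a ∉ freeF A ∧ FreeForN (Term.app (Func.fvar a) (Term.var x)) y A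

/-- AC₀₀ (full countable choice for numbers). -/
def AC00 : Set Formula :=
  {F | ∃ x y a A, ac00Side x y a A ∧ F = ac00Inst x y a A}

/-- qf-AC₀₀. -/
def qfAC00 : Set Formula :=
  {F | ∃ x y a A, IsQF A ∧ ac00Side x y a A ∧ F = ac00Inst x y a A}

/-- AC^Ar₀₀ (arithmetical countable choice). -/
def arAC00 : Set Formula :=
  {F | ∃ x y a A, IsArith A ∧ ac00Side x y a A ∧ F = ac00Inst x y a A}

/-- ∃!y A, rendered as ∃yA & ∀y∀z(A & A[z/y] → y = z). -/
def exUnique (y z : ℕ) (A : Formula) : Formula :=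
  (Formula.exN y A).and
    (.allN y (.allN z ((A.and (subN y (Term.var z) A)).imp
      (.eq (Term.var y) (Term.var z)))))

/-- AC₀₀! (countable comprehension): ∀x∃!yA(x,y) → ∃α∀xA(x,α(x)). -/
def AC00u : Set Formula :=
  {F | ∃ x y z a A, z ≠ y ∧ z ∉ freeN A ∧ FreeForN (Term.var z) y A ∧
    ac00Side x y a A ∧
    F = (Formula.allN x (exUnique y z A)).imp
          (.exF a (.allN x (subN y (Term.app (Func.fvar a) (Term.var x)) A)))}

/-- AC₀₁ : ∀x∃αA(x,α) → ∃β∀xA(x,λy.β(⟨x,y⟩)). -/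
def AC01 : Set Formula :=
  {F | ∃ (x a b y : ℕ) (A : Formula), b ∉ freeF A ∧ b ≠ a ∧ y ≠ x ∧
    FreeForF (Func.lam y (Term.app (Func.fvar b)
      (Term.pair (Term.var x) (Term.var y)))) a A ∧
    F = (Formula.allN x (.exF a A)).imp
          (.exF b (.allN x (subF a (Func.lam y (Term.app (Func.fvar b)
            (Term.pair (Term.var x) (Term.var y)))) A)))}

/-- CF_d : ∀x(A(x) ∨ ¬A(x)) → ∃α∀x[α(x)≤1 & (α(x)=0 ↔ A(x))]. -/
def CFd : Set Formula :=
  {F | ∃ (x a : ℕ) (A : Formula), a ∉ freeF A ∧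
    F = (Formula.allN x (A.or (Formula.neg A))).imp
          (.exF a (.allN x ((tle (Term.app (Func.fvar a) (Term.var x))
              (Term.succ Term.zero)).and
            (Formula.iff (.eq (Term.app (Func.fvar a) (Term.var x)) Term.zero) A))))}

/-- WCF₀⁻ : ¬¬∃ζ∀x(ζ(x)=0 ↔ A(x)) for negative A. -/
def WCF0neg : Set Formula :=
  {F | ∃ (x z : ℕ) (A : Formula), IsNeg A ∧ z ∉ freeF A ∧
    F = Formula.nneg (.exF z (.allN x
      (Formula.iff (.eq (Term.app (Func.fvar z) (Term.var x)) Term.zero) A)))}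

/-- Markov's Principle MP₁ : ∀α(¬∀x¬α(x)=0 → ∃x α(x)=0). -/
def MP1 : Formula :=
  .allF 0 ((Formula.neg (.allN 0 (Formula.neg
      (.eq (Term.app (Func.fvar 0) (Term.var 0)) Term.zero)))).imp
    (.exN 0 (.eq (Term.app (Func.fvar 0) (Term.var 0)) Term.zero)))

/-- Σ⁰₁-DNS₀ : ∀α[∀x¬¬∃y α(⟨x,y⟩)=0 → ¬¬∀x∃y α(⟨x,y⟩)=0]. -/
def Sigma01DNS0 : Formula :=
  .allF 0 ((Formula.allN 0 (Formula.nneg (.exN 1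
      (.eq (Term.app (Func.fvar 0) (Term.pair (Term.var 0) (Term.var 1))) Term.zero)))).imp
    (Formula.nneg (.allN 0 (.exN 1
      (.eq (Term.app (Func.fvar 0) (Term.pair (Term.var 0) (Term.var 1))) Term.zero)))))

/-- DNS₁ : ∀ρ[∀α¬¬∃x ρ(ᾱ(x))=0 → ¬¬∀α∃x ρ(ᾱ(x))=0]. -/
def DNS1 : Formula :=
  .allF 0 ((Formula.allF 1 (Formula.nneg (.exN 0
      (.eq (Term.app (Func.fvar 0) (Term.bar (Func.fvar 1) (Term.var 0))) Term.zero)))).imp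
    (Formula.nneg (.allF 1 (.exN 0
      (.eq (Term.app (Func.fvar 0) (Term.bar (Func.fvar 1) (Term.var 0))) Term.zero)))))

/-- B(α) : α is a binary sequence, ∀x α(x) ≤ 1. -/
def binF (a x : ℕ) : Formula :=
  .allN x (tle (Term.app (Func.fvar a) (Term.var x)) (Term.succ Term.zero))

/-- GDK : ∀ρ[∀α_{B(α)}¬¬∃x ρ(ᾱ(x))=0 → ¬¬∀α_{B(α)}∃x ρ(ᾱ(x))=0]. -/
def GDK : Formula :=
  .allF 0 ((Formula.allF 1 ((binF 1 1).imp (Formula.nneg (.exN 0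
      (.eq (Term.app (Func.fvar 0) (Term.bar (Func.fvar 1) (Term.var 0))) Term.zero))))).imp
    (Formula.nneg (.allF 1 ((binF 1 1).imp (.exN 0
      (.eq (Term.app (Func.fvar 0) (Term.bar (Func.fvar 1) (Term.var 0))) Term.zero))))))

/-- FT₁ (the fan theorem):
∀ρ[∀α_{B(α)}∃x ρ(ᾱ(x))=0 → ∃n∀α_{B(α)}∃x≤n ρ(ᾱ(x))=0]. -/
def FT1 : Formula :=
  .allF 0 ((Formula.allF 1 ((binF 1 1).imp (.exN 0
      (.eq (Term.app (Func.fvar 0) (Term.bar (Func.fvar 1) (Term.var 0))) Term.zero)))).imp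
    (.exN 2 (.allF 1 ((binF 1 1).imp (.exN 0 ((tle (Term.var 0) (Term.var 2)).and
      (.eq (Term.app (Func.fvar 0) (Term.bar (Func.fvar 1) (Term.var 0))) Term.zero)))))))

/-- An instance of bar induction BI₁ with bar ρ (function variable r) and
inductive predicate A(w). -/
def biInst (r aa xv w s : ℕ) (A : Formula) : Formula :=
  ((Formula.allF aa (.exN xv (.eq
      (Term.app (Func.fvar r) (Term.bar (Func.fvar aa) (Term.var xv))) Term.zero))).and
    ((Formula.allN w (((seqF (Term.var w)).and
        (.eq (Term.app (Func.fvar r) (Term.var w)) Term.zero)).imp A)).and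
      (Formula.allN w (((seqF (Term.var w)).and
        (.allN s (subN w (Term.cat (Term.var w)
          (Term.sing (Term.succ (Term.var s)))) A))).imp A)))).imp
  (subN w Term.empt A)

/-- BI₁ (bar induction, Kleene's ˣ26.3b). -/
def BI1 : Set Formula :=
  {F | ∃ r aa xv w s A, aa ≠ r ∧ aa ∉ freeF A ∧ s ≠ w ∧ s ∉ freeN A ∧
    FreeForN (Term.cat (Term.var w) (Term.sing (Term.succ (Term.var s)))) w A ∧
    F = biInst r aa xv w s A}

/-- Π⁰₁-WCF₀ : ∀α¬¬∃ζ∀x(ζ(x)=0 ↔ ∀y α(⟨x,y⟩)=0). -/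
def Pi01WCF0 : Formula :=
  .allF 0 (Formula.nneg (.exF 1 (.allN 0
    (Formula.iff (.eq (Term.app (Func.fvar 1) (Term.var 0)) Term.zero)
      (.allN 1 (.eq (Term.app (Func.fvar 0)
        (Term.pair (Term.var 0) (Term.var 1))) Term.zero))))))

/-- Π¹₁-WCF₀ : ∀γ¬¬∃ζ∀x(ζ(x)=0 ↔ ∀α∃y γ(ᾱ(⟨x,y⟩))=0). -/
def Pi11WCF0 : Formula :=
  .allF 0 (Formula.nneg (.exF 1 (.allN 0
    (Formula.iff (.eq (Term.app (Func.fvar 1) (Term.var 0)) Term.zero)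
      (.allF 2 (.exN 1 (.eq (Term.app (Func.fvar 0)
        (Term.bar (Func.fvar 2) (Term.pair (Term.var 0) (Term.var 1)))) Term.zero)))))))

/-- T(e,x,y) as a formula. -/
def TFml (e x y : Term) : Formula := .eq (Term.kT e x y) Term.zero

/-- GR(φ): "φ is general recursive",
∃e[∀x∃yT(e,x,y) & ∀x∀y(T(e,x,y) → U(y)=φ(x))]. -/
def GRof (φ : Func) : Formula :=
  .exN 0 ((Formula.allN 1 (.exN 2 (TFml (Term.var 0) (Term.var 1) (Term.var 2)))).and
    (.allN 1 (.allN 2 ((TFml (Term.var 0) (Term.var 1) (Term.var 2)).imp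
      (.eq (Term.kU (Term.var 2)) (Term.app φ (Term.var 1)))))))

/-- Church's Thesis CT₁ : ∀α GR(α). -/
def CT1 : Formula := .allF 0 (GRof (Func.fvar 0))

/-- ∀α¬¬GR(α). -/
def nnGR : Formula := .allF 0 (Formula.nneg (GRof (Func.fvar 0)))

/-- {τ}[α](x) = y in Kleene's sense: τ(⟨x⟩∗ᾱ(y)) > 0 with minimal y,
used to state continuous choice. -/
def ccApp (t a x y : ℕ) : Formula :=
  .eq (Term.app (Func.fvar t)
    (Term.cat (Term.sing (Term.var x)) (Term.bar (Func.fvar a) (Term.var y)))) Term.zero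

/-- An instance of Kleene's strong continuous choice CC₁₁ (Brouwer's principle
for functions, ˣ27.1): ∀α∃βA(α,β) → ∃τ∀α[{τ}[α] is completely defined &
∀β({τ}[α] = β → A(α,β))]. -/
def cc11Inst (a b t x y z : ℕ) (A : Formula) : Formula :=
  (Formula.allF a (.exF b A)).imp
    (.exF t (.allF a
      ((Formula.allN x (.exN y (Formula.neg (ccApp t a x y)))).and
        (.allF b ((Formula.allN x (.exN y
          ((Formula.eq (Term.app (Func.fvar t) (Term.cat (Term.sing (Term.var x))
              (Term.bar (Func.fvar a) (Term.var y))))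
            (Term.succ (Term.app (Func.fvar b) (Term.var x)))).and
           (.allN z ((tlt (Term.var z) (Term.var y)).imp (ccApp t a x z)))))).imp A)))))

/-- CC₁₁ as a schema. -/
def CC11 : Set Formula :=
  {F | ∃ a b t x y z A, t ∉ freeF A ∧ t ≠ a ∧ t ≠ b ∧ a ≠ b ∧
    x ∉ freeN A ∧ y ∉ freeN A ∧ z ∉ freeN A ∧
    x ≠ y ∧ y ≠ z ∧ x ≠ z ∧
    F = cc11Inst a b t x y z A}

/-! ### The systems -/

/-- Intuitionistic recursive analysis IRA = IA₁ + qf-AC₀₀. -/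
def IRA : Set Formula := IA1 ∪ qfAC00

/-- Kleene's basic system B = IA₁ + AC₀₁ + BI₁. -/
def Bsys : Set Formula := IA1 ∪ AC01 ∪ BI1

/-- Markov's recursive analysis MRA = IRA + CT₁ + MP₁. -/
def MRA : Set Formula := IRA ∪ {CT1, MP1}

/-- The subsystems of B considered in Theorem 5.1. -/
def theoremSystems : List (Set Formula) :=
  [IA1, IRA, IA1 ∪ arAC00, IA1 ∪ AC00u, IA1 ∪ AC00, IA1 ∪ AC01,
   IA1 ∪ {FT1}, IRA ∪ {FT1}, IRA ∪ BI1, IA1 ∪ AC00 ∪ BI1, Bsys]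

end NegInterp

/-!
Every negatively translated formula is stable (`¬¬A → A`) in IA₁. An equation `s = t` is
equivalent to `|s - t| = 0`, and `x = 0` is stable by induction on `x` (it is provable at `0`
and refutable at successors); stability is inherited through `&`, `→`, `∀` and negations.
Stability is exactly what makes the negative translation sound for classical logic, so the
translation of a classical derivation from `S ∪ U` is an intuitionistic derivation from the
translated axioms; when `S` already proves the translations of `U`, as IA₁ does for `DNS₁`,
the minimum classical extension of `S ∪ U` is that of `S` plus `U`.
-/

namespace NegInterp

open Formula

mutual
def tVarsN : Term → Finset ℕ
  | .var n => {n}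
  | .zero => ∅
  | .empt => ∅
  | .succ t => tVarsN t
  | .sing t => tVarsN t
  | .lh t => tVarsN t
  | .seqc t => tVarsN t
  | .kU t => tVarsN t
  | .add s t => tVarsN s ∪ tVarsN t
  | .mul s t => tVarsN s ∪ tVarsN t
  | .sub s t => tVarsN s ∪ tVarsN t
  | .pair s t => tVarsN s ∪ tVarsN t
  | .cat s t => tVarsN s ∪ tVarsN t
  | .kT e x y => tVarsN e ∪ tVarsN x ∪ tVarsN y
  | .app φ t => fVarsN φ ∪ tVarsN t
  | .bar φ t => fVarsN φ ∪ tVarsN t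
def fVarsN : Func → Finset ℕ
  | .fvar _ => ∅
  | .lam x t => insert x (tVarsN t)
end

theorem exists_not_mem_tVarsN (s t : Term) : ∃ v, v ∉ tVarsN s ∧ v ∉ tVarsN t := by
  obtain ⟨v, hv⟩ := Infinite.exists_notMem_finset (tVarsN s ∪ tVarsN t)
  exact ⟨v, by simpa [not_or] using hv⟩

theorem mem_tVarsN_of_mem_tFN {x : ℕ} {t : Term} (h : x ∈ tFN t) : x ∈ tVarsN t := by
  induction t using Term.rec (motive_2 := fun φ => x ∈ fFN φ → x ∈ fVarsN φ) <;>
    simp_all [tFN, fFN, tVarsN, fVarsN] <;> tauto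

theorem not_mem_tFN_of_not_mem_tVarsN {x : ℕ} {t : Term} (h : x ∉ tVarsN t) : x ∉ tFN t :=
  fun h' => h (mem_tVarsN_of_mem_tFN h')

theorem tSubN_of_not_mem_tVarsN {v : ℕ} (u : Term) {t : Term} (h : v ∉ tVarsN t) :
    tSubN v u t = t := by
  induction t using Term.rec (motive_2 := fun φ => v ∉ fVarsN φ → fSubN v u φ = φ) <;>
    simp_all [tSubN, fSubN, tVarsN, fVarsN]
  rintro rfl
  exact absurd rfl h

theorem tFForN_of_not_mem_tVarsN {v : ℕ} (u : Term) {t : Term} (h : v ∉ tVarsN t) :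
    tFForN u v t := by
  induction t using Term.rec (motive_2 := fun φ => v ∉ fVarsN φ → fFForN u v φ) <;>
    simp_all [tFForN, fFForN, tVarsN, fVarsN, not_mem_tFN_of_not_mem_tVarsN]

theorem tSubN_self (n : ℕ) (t : Term) : tSubN n (.var n) t = t := by
  induction t using Term.rec (motive_2 := fun φ => fSubN n (.var n) φ = φ) <;>
    simp_all [tSubN, fSubN]

theorem tFForN_self (n : ℕ) (t : Term) : tFForN (.var n) n t := by
  induction t using Term.rec (motive_2 := fun φ => fFForN (.var n) n φ) <;>
    simp_all [tFForN, fFForN, tFN]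
  tauto

theorem tSubF_self (a : ℕ) (t : Term) : tSubF a (.fvar a) t = t := by
  induction t using Term.rec (motive_2 := fun φ => fSubF a (.fvar a) φ = φ) <;>
    simp_all [tSubF, fSubF]

theorem tFForF_self (a : ℕ) (t : Term) : tFForF (.fvar a) a t := by
  induction t using Term.rec (motive_2 := fun φ => fFForF (.fvar a) a φ) <;>
    simp_all [tFForF, fFForF, fFN]

theorem subN_self (n : ℕ) (A : Formula) : subN n (.var n) A = A := by
  induction A <;> simp_all [subN, tSubN_self]

theorem FreeForN_self (n : ℕ) (A : Formula) : FreeForN (.var n) n A := by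
  induction A <;> simp_all [FreeForN, tFForN_self, tFN, tFF] <;> tauto

theorem subF_self (a : ℕ) (A : Formula) : subF a (.fvar a) A = A := by
  induction A <;> simp_all [subF, tSubF_self]

theorem FreeForF_self (a : ℕ) (A : Formula) : FreeForF (.fvar a) a A := by
  induction A <;> simp_all [FreeForF, tFForF_self, fFN, fFF] <;> tauto

theorem freeN_gTrans (A : Formula) : freeN (gTrans A) = freeN A := by
  induction A <;> simp_all [gTrans, freeN, Formula.neg]

theorem freeF_gTrans (A : Formula) : freeF (gTrans A) = freeF A := by
  induction A <;> simp_all [gTrans, freeF, Formula.neg]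

theorem gTrans_subN (n : ℕ) (u : Term) (A : Formula) :
    gTrans (subN n u A) = subN n u (gTrans A) := by
  induction A <;> simp_all [gTrans, subN, Formula.neg] <;> split_ifs <;>
    simp_all [gTrans, Formula.neg]

theorem gTrans_subF (a : ℕ) (ψ : Func) (A : Formula) :
    gTrans (subF a ψ A) = subF a ψ (gTrans A) := by
  induction A <;> simp_all [gTrans, subF, Formula.neg] <;> split_ifs <;>
    simp_all [gTrans, Formula.neg]

theorem FreeForN.gTrans {u : Term} {n : ℕ} {A : Formula} (h : FreeForN u n A) :
    FreeForN u n (gTrans A) := by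
  induction A <;> simp_all [NegInterp.gTrans, FreeForN, Formula.neg, freeN, freeN_gTrans] <;>
    tauto

theorem FreeForF.gTrans {ψ : Func} {a : ℕ} {A : Formula} (h : FreeForF ψ a A) :
    FreeForF ψ a (gTrans A) := by
  induction A <;> simp_all [NegInterp.gTrans, FreeForF, Formula.neg, freeF, freeF_gTrans] <;>
    tauto

variable {T T' : Set Formula} {A B C X : Formula}

theorem Prov.of_provable_axioms (hT : ∀ B ∈ T, Prov T' B) (h : Prov T A) : Prov T' A := by
  induction h with
  | ax hA => exact hT _ hA
  | mp _ _ ih₁ ih₂ => exact ih₁.mp ih₂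
  | allNI hn _ ih => exact allNI hn ih
  | exNE hn _ ih => exact exNE hn ih
  | allFI ha _ ih => exact allFI ha ih
  | exFE ha _ ih => exact exFE ha ih
  | genN _ ih => exact genN ih
  | genF _ ih => exact genF ih
  | allNE hu => exact allNE hu
  | exNI hu => exact exNI hu
  | allFE hψ => exact allFE hψ
  | exFI hψ => exact exFI hψ
  | k => exact k
  | s => exact s
  | andI => exact andI
  | andE1 => exact andE1
  | andE2 => exact andE2
  | orI1 => exact orI1
  | orI2 => exact orI2
  | orE => exact orE
  | exfalso => exact exfalso

theorem Prov.mono (hTT' : T ⊆ T') (h : Prov T A) : Prov T' A :=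
  h.of_provable_axioms fun _ hB => ax (hTT' hB)

/-- Derivations in the →,∧,⊥ fragment from hypotheses: without generalization rules
the deduction theorem holds, which `Prov` lacks. -/
inductive PropDeriv (H : Set Formula) : Formula → Prop
  | hyp {A : Formula} (h : A ∈ H) : PropDeriv H A
  | k {A B : Formula} : PropDeriv H (A.imp (B.imp A))
  | s {A B C : Formula} : PropDeriv H ((A.imp (B.imp C)).imp ((A.imp B).imp (A.imp C)))
  | andI {A B : Formula} : PropDeriv H (A.imp (B.imp (A.and B)))
  | andE1 {A B : Formula} : PropDeriv H ((A.and B).imp A)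
  | andE2 {A B : Formula} : PropDeriv H ((A.and B).imp B)
  | exfalso {A : Formula} : PropDeriv H (Formula.falsum.imp A)
  | mp {A B : Formula} : PropDeriv H (A.imp B) → PropDeriv H A → PropDeriv H B

namespace PropDeriv

variable {H : Set Formula}

theorem of_mem (A : Formula) (h : A ∈ H := by simp) : PropDeriv H A := hyp h

theorem imp_self : PropDeriv H (A.imp A) := mp (mp (s (B := A.imp A)) k) k

theorem deduction (h : PropDeriv (insert A H) B) : PropDeriv H (A.imp B) := by
  induction h with
  | hyp h => rcases h with rfl | h; exacts [imp_self, mp k (hyp h)]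
  | mp _ _ ih₁ ih₂ => exact mp (mp s ih₁) ih₂
  | k => exact mp k k
  | s => exact mp k s
  | andI => exact mp k andI
  | andE1 => exact mp k andE1
  | andE2 => exact mp k andE2
  | exfalso => exact mp k exfalso

theorem toProv (h : PropDeriv H A) (hH : ∀ B ∈ H, Prov T B) : Prov T A := by
  induction h with
  | hyp h => exact hH _ h
  | mp _ _ ih₁ ih₂ => exact ih₁.mp ih₂
  | k => exact .k
  | s => exact .s
  | andI => exact .andI
  | andE1 => exact .andE1
  | andE2 => exact .andE2
  | exfalso => exact .exfalso

end PropDeriv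

theorem Prov.of_propDeriv (h : PropDeriv ∅ A) : Prov T A :=
  h.toProv (by simp)

theorem Prov.of_propDeriv_of_prov (hX : Prov T X) (h : PropDeriv {X} A) : Prov T A :=
  h.toProv (by simpa using hX)

theorem Prov.imp_trans (h₁ : Prov T (A.imp B)) (h₂ : Prov T (B.imp C)) : Prov T (A.imp C) :=
  .mp (.mp .s (.mp .k h₂)) h₁

theorem Prov.imp_of_imp_imp (h : Prov T (X.imp (A.imp B))) (hA : Prov T A) : Prov T (X.imp B) :=
  .mp (.mp .s h) (.mp .k hA)

theorem Prov.imp_nneg (A : Formula) : Prov T (A.imp A.nneg) :=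
  .of_propDeriv <| .deduction <| .deduction <| .mp (.of_mem A.neg) (.of_mem A)

theorem Prov.imp_neg_comm (h : Prov T (A.imp B.neg)) : Prov T (B.imp A.neg) :=
  .of_propDeriv_of_prov h <| .deduction <| .deduction <|
    .mp (.mp (.of_mem (A.imp B.neg)) (.of_mem A)) (.of_mem B)

theorem Prov.neg_imp_neg (h : Prov T (A.imp B)) : Prov T (B.neg.imp A.neg) :=
  imp_neg_comm (h.imp_trans (imp_nneg B))

theorem Prov.nneg_imp_nneg (h : Prov T (A.imp B)) : Prov T (A.nneg.imp B.nneg) :=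
  h.neg_imp_neg.neg_imp_neg

theorem Prov.imp_and (h₁ : Prov T (X.imp A)) (h₂ : Prov T (X.imp B)) :
    Prov T (X.imp (A.and B)) :=
  .mp (.mp .s (h₁.imp_trans .andI)) h₂

theorem Prov.imp_neg_neg_and_neg_left : Prov T (A.imp (A.neg.and B.neg).neg) :=
  .of_propDeriv <| .deduction <| .deduction <|
    .mp (.mp .andE1 (.of_mem (A.neg.and B.neg))) (.of_mem A)

theorem Prov.imp_neg_neg_and_neg_right : Prov T (B.imp (A.neg.and B.neg).neg) :=
  .of_propDeriv <| .deduction <| .deduction <|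
    .mp (.mp .andE2 (.of_mem (A.neg.and B.neg))) (.of_mem B)

theorem Prov.allN_imp_self (n : ℕ) (A : Formula) : Prov T ((allN n A).imp A) := by
  simpa only [subN_self] using allNE (T := T) (FreeForN_self n A)

theorem Prov.allF_imp_self (a : ℕ) (A : Formula) : Prov T ((allF a A).imp A) := by
  simpa only [subF_self] using allFE (T := T) (FreeForF_self a A)

def Stable (T : Set Formula) (A : Formula) : Prop := Prov T (A.nneg.imp A)

theorem Stable.prov (h : Stable T A) : Prov T (A.nneg.imp A) := h

theorem stable_of_prov (h : Prov T A) : Stable T A :=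
  .mp .k h

theorem stable_of_prov_neg (h : Prov T A.neg) : Stable T A :=
  .of_propDeriv_of_prov h <| .deduction <| .mp .exfalso (.mp (.of_mem A.nneg) (.of_mem A.neg))

theorem stable_neg (A : Formula) : Stable T A.neg :=
  (Prov.imp_nneg A).neg_imp_neg

theorem stable_falsum : Stable T falsum :=
  Prov.of_propDeriv <| .deduction <| .mp (.of_mem falsum.nneg) .imp_self

theorem Stable.of_imp_of_imp (hB : Stable T B) (h₁ : Prov T (A.imp B))
    (h₂ : Prov T (B.imp A)) : Stable T A :=
  (h₁.nneg_imp_nneg.imp_trans hB).imp_trans h₂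

theorem Stable.and (hA : Stable T A) (hB : Stable T B) : Stable T (A.and B) :=
  Prov.imp_and ((Prov.nneg_imp_nneg .andE1).imp_trans hA)
    ((Prov.nneg_imp_nneg .andE2).imp_trans hB)

theorem Stable.imp (A : Formula) (hB : Stable T B) : Stable T (A.imp B) :=
  .of_propDeriv_of_prov hB.prov <| .deduction <| .deduction <|
    .mp (.of_mem (B.nneg.imp B)) <| .deduction <| .mp (.of_mem (A.imp B).nneg) <| .deduction <|
      .mp (.of_mem B.neg) (.mp (.of_mem (A.imp B)) (.of_mem A))

theorem Stable.allN (n : ℕ) (h : Stable T A) : Stable T (Formula.allN n A) :=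
  .allNI (by simp [freeN, nneg, neg]) ((Prov.allN_imp_self n A).nneg_imp_nneg.imp_trans h)

theorem Stable.allF (a : ℕ) (h : Stable T A) : Stable T (Formula.allF a A) :=
  .allFI (by simp [freeF, nneg, neg]) ((Prov.allF_imp_self a A).nneg_imp_nneg.imp_trans h)

theorem Stable.allF_nneg_imp (a : ℕ) (h : Stable T A) :
    Prov T ((Formula.allF a A.nneg).imp (Formula.allF a A).nneg) :=
  (Prov.allFI (by simp [freeF]) ((Prov.allF_imp_self a _).imp_trans h)).imp_trans (.imp_nneg _)

theorem Stable.imp_of_neg_imp (hB : Stable T B) (h : Prov T (B.neg.imp X)) :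
    Prov T (X.neg.imp B) :=
  h.neg_imp_neg.imp_trans hB

theorem Stable.neg_and_neg_elim (hC : Stable T C) :
    Prov T ((A.imp C).imp ((B.imp C).imp ((A.neg.and B.neg).neg.imp C))) :=
  .of_propDeriv_of_prov hC.prov <| .deduction <| .deduction <| .deduction <|
    .mp (.of_mem (C.nneg.imp C)) <| .deduction <| .mp (.of_mem (A.neg.and B.neg).neg) <|
      .mp (.mp .andI (.deduction <| .mp (.of_mem C.neg) (.mp (.of_mem (A.imp C)) (.of_mem A))))
        (.deduction <| .mp (.of_mem C.neg) (.mp (.of_mem (B.imp C)) (.of_mem B)))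

theorem prov_IA1_of_valid {s t : Term} (h : ∀ ρ σ, evalT ρ σ s = evalT ρ σ t) :
    Prov IA1 (.eq s t) :=
  .ax (Or.inl (Or.inl (Or.inl (Or.inl ⟨s, t, rfl, h⟩))))

theorem prov_IA1_eqAx {n : ℕ} {s t : Term} {A : Formula} (hs : FreeForN s n A)
    (ht : FreeForN t n A) : Prov IA1 ((Formula.eq s t).imp ((subN n s A).imp (subN n t A))) :=
  .ax (Or.inl (Or.inl (Or.inl (Or.inr ⟨n, s, t, A, hs, ht, rfl⟩))))

theorem prov_IA1_succ_ne_zero (t : Term) : Prov IA1 (Formula.eq (.succ t) .zero).neg :=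
  .ax (Or.inl (Or.inl (Or.inr (Or.inr ⟨t, rfl⟩))))

theorem prov_IA1_ind (x : ℕ) (A : Formula) :
    Prov IA1 (((subN x .zero A).and (.allN x (A.imp (subN x (.succ (.var x)) A)))).imp
      (.allN x A)) :=
  .ax (Or.inl (Or.inr ⟨x, A, rfl⟩))

theorem stable_eq_zero (m : Term) : Stable IA1 (.eq m .zero) := by
  set P : Formula := .eq (.var 0) .zero
  have hsub (u : Term) :
      subN 0 u (P.nneg.imp P) = (Formula.eq u .zero).nneg.imp (.eq u .zero) := by
    simp [P, subN, tSubN, nneg, neg]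
  have hbase : Stable IA1 (.eq .zero .zero) :=
    stable_of_prov (prov_IA1_of_valid fun _ _ => rfl)
  have hstep : Stable IA1 (.eq (.succ (.var 0)) .zero) :=
    stable_of_prov_neg (prov_IA1_succ_ne_zero _)
  have hall : Prov IA1 (.allN 0 (P.nneg.imp P)) := by
    refine (prov_IA1_ind 0 _).mp (Prov.andI.mp ?_ |>.mp ?_)
    · rwa [hsub]
    · rw [hsub]; exact .genN (.mp .k hstep)
  have hm := (Prov.allNE (u := m) (by simp [P, FreeForN, tFForN, nneg, neg])).mp hall
  rwa [hsub] at hm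

def tdist (s t : Term) : Term := .add (.sub s t) (.sub t s)

/-- `t` if `n = 0`, and `s` otherwise. -/
def ifZero (n t s : Term) : Term :=
  .add (.mul t (.sub (.succ .zero) n)) (.mul s (.sub (.succ .zero) (.sub (.succ .zero) n)))

theorem prov_IA1_tdist_eq_zero_of_eq (s t : Term) :
    Prov IA1 ((Formula.eq s t).imp (.eq (tdist s t) .zero)) := by
  obtain ⟨v, hs, -⟩ := exists_not_mem_tVarsN s t
  have hfree (u : Term) : FreeForN u v (.eq (tdist s (.var v)) .zero) := by
    simp [FreeForN, tdist, tFForN, tFForN_of_not_mem_tVarsN u hs]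
  have h := prov_IA1_eqAx (s := s) (t := t) (hfree s) (hfree t)
  simp only [subN, tdist, tSubN, tSubN_of_not_mem_tVarsN _ hs, if_pos] at h
  exact h.imp_of_imp_imp (prov_IA1_of_valid fun _ _ => by simp [evalT])

theorem prov_IA1_eq_of_tdist_eq_zero (s t : Term) :
    Prov IA1 ((Formula.eq (tdist s t) .zero).imp (.eq s t)) := by
  obtain ⟨v, hs, ht⟩ := exists_not_mem_tVarsN s t
  have hfree (u : Term) : FreeForN u v (.eq s (ifZero (.var v) t s)) := by
    simp [FreeForN, ifZero, tFForN, tFForN_of_not_mem_tVarsN u hs, tFForN_of_not_mem_tVarsN u ht]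
  have h₁ := prov_IA1_eqAx (s := tdist s t) (t := .zero) (hfree _) (hfree _)
  simp only [subN, ifZero, tSubN, tSubN_of_not_mem_tVarsN _ hs, tSubN_of_not_mem_tVarsN _ ht,
    if_pos] at h₁
  have h₂ := prov_IA1_eqAx (n := v) (s := ifZero .zero t s) (t := t) (A := .eq s (.var v))
    ⟨tFForN_of_not_mem_tVarsN _ hs, trivial⟩ ⟨tFForN_of_not_mem_tVarsN _ hs, trivial⟩
  simp only [subN, tSubN, tSubN_of_not_mem_tVarsN _ hs, if_pos] at h₂
  refine (h₁.imp_of_imp_imp (prov_IA1_of_valid fun ρ σ => ?_)).imp_trans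
    (h₂.mp (prov_IA1_of_valid fun _ _ => by simp [ifZero, evalT]))
  simp only [tdist, evalT]
  rcases eq_or_ne (evalT ρ σ s) (evalT ρ σ t) with h | h
  · simp [h]
  · have : 1 - (evalT ρ σ s - evalT ρ σ t + (evalT ρ σ t - evalT ρ σ s)) = 0 := by omega
    simp [this]

theorem stable_eq (s t : Term) : Stable IA1 (.eq s t) :=
  (stable_eq_zero (tdist s t)).of_imp_of_imp (prov_IA1_tdist_eq_zero_of_eq s t)
    (prov_IA1_eq_of_tdist_eq_zero s t)

theorem stable_gTrans (A : Formula) : Stable IA1 (gTrans A) := by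
  induction A with
  | eq s t => exact stable_eq s t
  | falsum => exact stable_falsum
  | and A B ihA ihB => exact ihA.and ihB
  | imp A B _ ihB => exact ihB.imp _
  | allN n A ih => exact ih.allN n
  | allF a A ih => exact ih.allF a
  | or | exN | exF => exact stable_neg _

theorem Prov.gTrans_of_union_DNE (hIA : Subsystem IA1 T') (hT : ∀ A ∈ T, Prov T' (gTrans A))
    (h : Prov (T ∪ DNE) A) : Prov T' (gTrans A) := by
  have stable (A : Formula) : Stable T' (gTrans A) := hIA _ (stable_gTrans A)
  induction h with
  | ax h =>
    rcases h with h | ⟨B, rfl⟩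
    exacts [hT _ h, stable B]
  | mp _ _ ih₁ ih₂ => exact ih₁.mp ih₂
  | orI1 => exact imp_neg_neg_and_neg_left
  | orI2 => exact imp_neg_neg_and_neg_right
  | orE => exact (stable _).neg_and_neg_elim
  | allNE hu => simp only [gTrans, gTrans_subN]; exact allNE hu.gTrans
  | allNI hn _ ih => exact allNI (by rwa [freeN_gTrans]) ih
  | exNI hu =>
    simp only [gTrans, gTrans_subN]
    exact (allNE (A := (gTrans _).neg) ⟨hu.gTrans, trivial⟩).imp_neg_comm
  | exNE hn _ ih =>
    exact (stable _).imp_of_neg_imp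
      (allNI (by simp [freeN, neg, freeN_gTrans, hn]) ih.neg_imp_neg)
  | allFE hψ => simp only [gTrans, gTrans_subF]; exact allFE hψ.gTrans
  | allFI ha _ ih => exact allFI (by rwa [freeF_gTrans]) ih
  | exFI hψ =>
    simp only [gTrans, gTrans_subF]
    exact (allFE (A := (gTrans _).neg) ⟨hψ.gTrans, trivial⟩).imp_neg_comm
  | exFE ha _ ih =>
    exact (stable _).imp_of_neg_imp
      (allFI (by simp [freeF, neg, freeF_gTrans, ha]) ih.neg_imp_neg)
  | genN _ ih => exact genN ih
  | genF _ ih => exact genF ih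
  | k => exact k
  | s => exact s
  | andI => exact andI
  | andE1 => exact andE1
  | andE2 => exact andE2
  | exfalso => exact exfalso

theorem gThms_mono {S S' : Set Formula} (h : S ⊆ S') : gThms S ⊆ gThms S' := by
  rintro _ ⟨A, hA, rfl⟩
  exact ⟨A, hA.mono (Set.union_subset_union_left DNE h), rfl⟩

theorem sameTheory_minClassExt_union {S U : Set Formula} (hS : Subsystem IA1 S)
    (hU : ∀ D ∈ U, Prov S (gTrans D)) :
    SameTheory (minClassExt (S ∪ U)) (minClassExt S ∪ U) := by
  have hS' : S ⊆ minClassExt S ∪ U := fun _ h => Or.inl (Or.inl h)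
  intro A
  constructor
  · refine Prov.of_provable_axioms ?_
    rintro B ((hB | hB) | ⟨C, hC, rfl⟩)
    · exact .ax (hS' hB)
    · exact .ax (Or.inr hB)
    · refine hC.gTrans_of_union_DNE (fun B hB => (hS B hB).mono hS') ?_
      rintro D (hD | hD)
      · exact .ax (Or.inl (Or.inr ⟨D, .ax (Or.inl hD), rfl⟩))
      · exact (hU D hD).mono hS'
  · refine Prov.mono ?_
    rintro B ((hB | hB) | hB)
    · exact Or.inl (Or.inl hB)
    · exact Or.inr (gThms_mono Set.subset_union_left hB)
    · exact Or.inl (Or.inr hB)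

/-- `(DNS₁)^g` is the statement that `∀α ¬¬P(α)` implies `¬¬∀α P(α)` for the negative
formula `P(α) = ¬∀x ¬ ρ(ᾱ(x)) = 0`, which is stable. -/
theorem prov_gTrans_DNS1 : Prov IA1 (gTrans DNS1) :=
  .genF ((stable_neg _).allF_nneg_imp 1)

/-- IA₁ proves the negative translation (DNS₁)^g; therefore,
for any system S with IA₁ ⊆ S ⊆ B, the minimum classical extension of
S + DNS₁ is S^{+g} + DNS₁. -/
theorem statement16 :
    Prov IA1 (gTrans DNS1) ∧
    ∀ S : Set Formula, Subsystem IA1 S → Subsystem S Bsys →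
      SameTheory (minClassExt (S ∪ {DNS1})) (minClassExt S ∪ {DNS1}) := by
  refine ⟨prov_gTrans_DNS1, fun S hS _ => sameTheory_minClassExt_union hS ?_⟩
  rintro D rfl
  exact hS _ prov_gTrans_DNS1

end NegInterp
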